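/- Every subquandle of a free quandle is a free quandle. -/

import Mathlib

open FreeGroup

/-- The free quandle on `X`, realized as the union of the conjugacy classes of the
generators inside the free group `F(X)`. -/
def FQ (X : Type*) : Set (FreeGroup X) :=
  {g | ∃ (x : X) (w : FreeGroup X), g = w⁻¹ * FreeGroup.of x * w}

/-- A subset of a group that is a subquandle of `Conj G`, i.e. closed under both
conjugation operations `a ▷ b = b⁻¹ a b` and `a ◁ b = b a b⁻¹`. -/
def IsSubquandle {G : Type*} [Group G] (Q : Set G) : Prop :=
  ∀ a ∈ Q, ∀ b ∈ Q, b⁻¹ * a * b ∈ Q ∧ b * a * b⁻¹ ∈ Q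

/-- Membership in the subquandle of `Conj G` generated by a set `S`. -/
inductive SubquandleClosure {G : Type*} [Group G] (S : Set G) : G → Prop
  | base {a : G} : a ∈ S → SubquandleClosure S a
  | conj {a b : G} : SubquandleClosure S a → SubquandleClosure S b →
      SubquandleClosure S (b⁻¹ * a * b)
  | conjInv {a b : G} : SubquandleClosure S a → SubquandleClosure S b →
      SubquandleClosure S (b * a * b⁻¹)

/-- A subset of a group is independent if it freely generates a free subgroup,
i.e. the induced homomorphism from the free group on `S` is injective. -/
def Independent {G : Type*} [Group G] (S : Set G) : Prop :=
  Function.Injective (FreeGroup.lift (Subtype.val : S → G))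

/-- A subset `Q` of a group, closed under conjugation, is a free quandle with basis
`S ⊆ Q` if it satisfies the universal property of free quandles: every map from `S`
to a quandle extends uniquely to a quandle morphism on `Q`. -/
def IsFreeQuandleOn {G : Type*} [Group G] (Q S : Set G) : Prop :=
  ∃ hSQ : S ⊆ Q,
    ∀ (Q' : Type) [Quandle Q'] (f : S → Q'),
      ∃! h : Q → Q',
        (∀ s : S, h ⟨s.1, hSQ s.2⟩ = f s) ∧
        ∀ (a b : Q) (hm : (a : G) * (b : G) * (a : G)⁻¹ ∈ Q),
          h ⟨(a : G) * (b : G) * (a : G)⁻¹, hm⟩ = Shelf.act (h a) (h b)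

/-- `w` has no first letter equal to `x` or `x⁻¹`. -/
def FirstLetterNe {X : Type*} [DecidableEq X] (w : FreeGroup X) (x : X) : Prop :=
  w.toWord.head?.map Prod.fst ≠ some x

/-- `P x`: reduced words `w` with `x^w ∈ Q` which are trivial or do not start
with `x^{±1}`. -/
def Px {X : Type*} [DecidableEq X] (Q : Set (FreeGroup X)) (x : X) : Set (FreeGroup X) :=
  {w | w⁻¹ * FreeGroup.of x * w ∈ Q ∧ (w = 1 ∨ FirstLetterNe w x)}

/-- `T x`: the "non-shrinkable" elements of `P x`. -/
def Tx {X : Type*} [DecidableEq X] (Q : Set (FreeGroup X)) (x : X) : Set (FreeGroup X) :=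
  {w ∈ Px Q x | ∀ q ∈ Q, ∀ ε ∈ ({1, -1} : Set ℤ), (w * q ^ ε).norm > w.norm}

/-- The candidate basis `S(Q) = ⋃ₓ x^{Tₓ}`. -/
def SQbasis {X : Type*} [DecidableEq X] (Q : Set (FreeGroup X)) : Set (FreeGroup X) :=
  ⋃ x : X, {g | ∃ w ∈ Tx Q x, g = w⁻¹ * FreeGroup.of x * w}

/-- In the product of the reduced words `w` and `v`, exactly `k` letters cancel from
the end of `w` against `k` letters from the beginning of `v`. -/
def CancelBound {X : Type*} [DecidableEq X] (w v : FreeGroup X) (k : ℕ) : Prop :=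
  (w * v).toWord = w.toWord.take (w.toWord.length - k) ++ v.toWord.drop k

/-!
For a generator `x`, call a conjugator `w` of `x` (with `x^w ∈ Q` and `w` not starting with
`x^{±1}`) minimal if every `q^{±1}`, `q ∈ Q`, makes `w` longer, and let `S` be the set of
`x^w` with `w` minimal. `S` generates `Q`: if `|w q^{±1}| ≤ |w|` then, by parity, the conjugator
of `q` is shorter than `w` and `|w q^{±1}| < |w|`, so `x^w = (x^{w q^{±1}})^{q^{∓1}}` is built
from elements with shorter conjugators. `S` is a free basis of the subgroup it generates: by
minimality, in a reduced product of elements of `S^{±1}` cancellation never reaches the middle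
letter of the last factor. Finally, the conjugates of `S` in `⟨S⟩ ≅ F(S)` form the free quandle
on `S`: a map `f : S → Q'` extends by letting `F(S)` act on `Q'` with `s` acting as `f s ◃ ·`,
which is well defined because the centraliser of a generator `s` of `F(S)` is `⟨s⟩`, and
`⟨s⟩` fixes `f s`.
-/

open scoped Quandles

theorem List.append_cons_eq_append_cons {γ : Type*} {X Y v w : List γ} {a b : γ}
    (h : X ++ a :: v = Y ++ b :: w) :
    (∃ W, w = W ++ a :: v) ∨ (a = b ∧ v = w) ∨ ∃ V, v = V ++ b :: w := by
  rcases List.append_eq_append_iff.1 h with ⟨_ | ⟨c, V⟩, -, hV⟩ | ⟨_ | ⟨c, W⟩, -, hW⟩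
  · simp_all
  · simp only [List.cons_append, List.cons.injEq] at hV
    exact .inr (.inr ⟨V, hV.2⟩)
  · simp_all
  · simp only [List.cons_append, List.cons.injEq] at hW
    exact .inl ⟨W, hW.2⟩

namespace FreeGroup

section

variable {α β : Type*}

theorem invRev_singleton (a : α × Bool) : invRev [a] = [(a.1, !a.2)] := rfl

theorem mk_singleton_eq_zpow (x : α) (b : Bool) :
    mk [(x, b)] = of x ^ (bif b then (1 : ℤ) else -1) := by
  cases b <;> simp [of, inv_mk, invRev]

theorem conj_mk_singleton_eq_zpow (r : FreeGroup α) (x : α) (b : Bool) :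
    r⁻¹ * mk [(x, b)] * r = (r⁻¹ * of x * r) ^ (bif b then (1 : ℤ) else -1) := by
  rw [mk_singleton_eq_zpow]
  simpa using (conj_zpow (a := r⁻¹) (b := of x)).symm

theorem lift_conj_mk_singleton (ι : β → α) (ρ : β → FreeGroup α) (t : β) (e : Bool) :
    lift (fun b => (ρ b)⁻¹ * of (ι b) * ρ b) (mk [(t, e)]) = (ρ t)⁻¹ * mk [(ι t, e)] * ρ t := by
  rw [mk_singleton_eq_zpow, map_zpow, lift_apply_of, conj_mk_singleton_eq_zpow]

theorem lift_act'_act {R : Type*} [Rack R] (f : α → R) (c : FreeGroup α) (u v : R) :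
    lift (fun a => Rack.act' (f a)) c (u ◃ v) =
      lift (fun a => Rack.act' (f a)) c u ◃ lift (fun a => Rack.act' (f a)) c v := by
  induction c using FreeGroup.induction_on generalizing u v with
  | C1 => rfl
  | of a => exact Rack.self_distrib
  | inv_of a ih =>
    apply (lift (fun a => Rack.act' (f a)) (of a)).injective
    rw [_root_.map_inv, ih]
    simp
  | mul c d ihc ihd => simp [ihc, ihd]

end

variable {α β : Type*} [DecidableEq α]

theorem exists_reduce_append_eq {L R : List (α × Bool)} (hL : IsReduced L) (hR : IsReduced R) :
    ∃ L₁ M L₂, L = L₁ ++ invRev M ∧ R = M ++ L₂ ∧ reduce (L ++ R) = L₁ ++ L₂ := by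
  induction R generalizing L with
  | nil => exact ⟨L, [], [], by simp [invRev], rfl, by simpa using hL.reduce_eq⟩
  | cons a R ih =>
    have hR' : IsReduced R := hR.infix ⟨[a], [], by simp⟩
    rcases L.eq_nil_or_concat' with rfl | ⟨L', b, rfl⟩
    · exact ⟨[], [], a :: R, by simp [invRev], rfl, hR.reduce_eq⟩
    by_cases hab : b = (a.1, !a.2)
    · obtain ⟨L₁, M, L₂, rfl, rfl, hred⟩ := ih (L := L') (hL.infix ⟨[], [b], by simp⟩) hR'
      refine ⟨L₁, a :: M, L₂, by simp [hab, invRev], rfl, ?_⟩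
      obtain ⟨x, e⟩ := a
      rw [← hred, hab, List.append_assoc, List.singleton_append]
      exact reduce.Step.eq Red.Step.not_rev
    · refine ⟨L' ++ [b], [], a :: R, by simp [invRev], rfl, IsReduced.reduce_eq ?_⟩
      have hba : IsReduced ([b] ++ [a]) := by
        obtain ⟨x, e⟩ := a
        obtain ⟨y, f⟩ := b
        simp only [List.singleton_append, isReduced_cons_cons, IsReduced.singleton, and_true]
        rintro rfl
        cases e <;> cases f <;> simp_all
      simpa using (hL.append_overlap hba (by simp)).append_overlap
        (L₂ := [a]) (by simpa using hR) (by simp)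

theorem exists_toWord_mul_eq (g h : FreeGroup α) :
    ∃ L₁ M L₂, g.toWord = L₁ ++ invRev M ∧ h.toWord = M ++ L₂ ∧ (g * h).toWord = L₁ ++ L₂ := by
  rw [toWord_mul]
  exact exists_reduce_append_eq isReduced_toWord isReduced_toWord

theorem firstLetterNe_one (x : α) : FirstLetterNe 1 x := by
  simp [FirstLetterNe]

theorem toWord_mk_singleton_mul {c : FreeGroup α} {x : α} (hc : FirstLetterNe c x) (b : Bool) :
    (mk [(x, b)] * c).toWord = (x, b) :: c.toWord := by
  rw [← mk_toWord (x := c), mul_mk, toWord_mk, mk_toWord]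
  apply IsReduced.reduce_eq
  rcases hw : c.toWord with _ | ⟨⟨y, e⟩, L⟩
  · exact .singleton
  · have hyx : y ≠ x := by simpa [FirstLetterNe, hw] using hc
    rw [List.singleton_append, isReduced_cons_cons]
    exact ⟨fun h => absurd h.symm hyx, hw ▸ isReduced_toWord⟩

theorem toWord_conj_mk_singleton {u : FreeGroup α} {x : α} (hu : FirstLetterNe u x) (b : Bool) :
    (u⁻¹ * mk [(x, b)] * u).toWord = invRev u.toWord ++ (x, b) :: u.toWord := by
  have hright : IsReduced ([(x, b)] ++ u.toWord) := by
    simpa [toWord_mk_singleton_mul hu] using isReduced_toWord (x := mk [(x, b)] * u)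
  have hleft : IsReduced (invRev u.toWord ++ [(x, b)]) := by
    have h := isReduced_toWord (x := (mk [(x, !b)] * u)⁻¹)
    rwa [toWord_inv, toWord_mk_singleton_mul hu, invRev_cons, invRev_singleton, Bool.not_not] at h
  have hmk : u⁻¹ * mk [(x, b)] * u = mk (invRev u.toWord ++ [(x, b)] ++ u.toWord) := by
    conv_lhs => rw [← mk_toWord (x := u)]
    rw [inv_mk, mul_mk, mul_mk]
  rw [hmk, toWord_mk, (hleft.append_overlap hright (by simp)).reduce_eq]
  simp

theorem exists_zpow_mul_of_not_firstLetterNe {c : FreeGroup α} {x : α}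
    (hc : ¬ FirstLetterNe c x) : ∃ n : ℤ, ∃ c', c = of x ^ n * c' ∧ c'.norm < c.norm := by
  rcases hw : c.toWord with _ | ⟨⟨y, b⟩, L⟩
  · simp [FirstLetterNe, hw] at hc
  · obtain rfl : y = x := by simpa [FirstLetterNe, hw] using hc
    refine ⟨bif b then 1 else -1, mk L, ?_, ?_⟩
    · rw [← mk_singleton_eq_zpow, mul_mk, List.singleton_append, ← hw, mk_toWord]
    · calc (mk L).norm ≤ L.length := norm_mk_le
        _ < c.norm := by simp [norm, hw]

theorem exists_firstLetterNe_conj (x : α) (w : FreeGroup α) :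
    ∃ u, u⁻¹ * of x * u = w⁻¹ * of x * w ∧ FirstLetterNe u x ∧ u.norm ≤ w.norm := by
  induction hn : w.norm using Nat.strong_induction_on generalizing w with
  | _ n ih =>
  by_cases hw : FirstLetterNe w x
  · exact ⟨w, rfl, hw, hn.le⟩
  obtain ⟨k, w', rfl, hlt⟩ := exists_zpow_mul_of_not_firstLetterNe hw
  obtain ⟨u, hu, hux, hle⟩ := ih _ (hn ▸ hlt) w' rfl
  refine ⟨u, ?_, hux, by omega⟩
  rw [hu]
  group

theorem eq_one_of_commute_of_firstLetterNe {c : FreeGroup α} {x : α} (hcx : Commute c (of x))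
    (hc : FirstLetterNe c x) (hc' : FirstLetterNe c⁻¹ x) : c = 1 := by
  have hleft : (of x * c).toWord = (x, true) :: c.toWord := toWord_mk_singleton_mul hc true
  have hright : (c * of x).toWord = c.toWord ++ [(x, true)] := by
    have h : c * of x = (mk [(x, false)] * c⁻¹)⁻¹ := by
      rw [mk_singleton_eq_zpow, cond_false]
      group
    rw [h, toWord_inv, toWord_mk_singleton_mul hc' false, invRev_cons, invRev_singleton,
      toWord_inv, invRev_invRev]
    rfl
  rw [hcx.eq, hleft] at hright
  rcases hw : c.toWord with _ | ⟨⟨y, e⟩, L⟩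
  · exact toWord_eq_nil_iff.1 hw
  · rw [hw] at hright
    simp only [List.cons_append, List.cons.injEq, Prod.mk.injEq] at hright
    simp [FirstLetterNe, hw, ← hright.1.1] at hc

theorem mem_zpowers_of_commute {c : FreeGroup α} {x : α} (hcx : Commute c (of x)) :
    c ∈ Subgroup.zpowers (of x) := by
  induction hn : c.norm using Nat.strong_induction_on generalizing c with
  | _ n ih =>
  have peel : ∀ d : FreeGroup α, d.norm = n → Commute d (of x) → ¬ FirstLetterNe d x →
      d ∈ Subgroup.zpowers (of x) := by
    intro d hd hdx hfirst
    obtain ⟨k, d', rfl, hlt⟩ := exists_zpow_mul_of_not_firstLetterNe hfirst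
    have hd'x : Commute d' (of x) := by
      simpa using ((Commute.zpow_left (Commute.refl (of x)) k).inv_left).mul_left hdx
    exact Subgroup.mul_mem _ (Subgroup.zpow_mem_zpowers _ _) (ih _ (hd ▸ hlt) hd'x rfl)
  by_cases hc : FirstLetterNe c x
  · by_cases hc' : FirstLetterNe c⁻¹ x
    · simp [eq_one_of_commute_of_firstLetterNe hcx hc hc']
    · exact inv_inv c ▸ Subgroup.inv_mem _ (peel _ (norm_inv_eq.trans hn) hcx.inv_left hc')
  · exact peel c hn hcx hc

theorem eq_and_mem_zpowers_of_conj_eq {c : FreeGroup α} {x y : α} (h : c * of x * c⁻¹ = of y) :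
    x = y ∧ c ∈ Subgroup.zpowers (of x) := by
  have hxy : x = y := by
    have h' := congrArg (lift fun z => Multiplicative.ofAdd (if z = x then (1 : ℤ) else 0)) h
    by_contra hne
    simp [Ne.symm hne] at h'
  subst hxy
  refine ⟨rfl, mem_zpowers_of_commute ?_⟩
  rw [commute_iff_eq]
  nth_rw 2 [← h]
  group

theorem exists_toWord_mul_conj_mk_singleton {ι : β → α} {ρ : β → FreeGroup α}
    (hsuffix : ∀ b c A e, (ρ b).toWord ≠ A ++ (ι c, e) :: (ρ c).toWord)
    (hinj : Function.Injective fun b => (ι b, ρ b))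
    {P : FreeGroup α} {A : List (α × Bool)} {s t : β} {b e : Bool}
    (hP : P.toWord = A ++ (ι s, b) :: (ρ s).toWord) (ht : FirstLetterNe (ρ t) (ι t))
    (hst : ¬ (s = t ∧ b = !e)) :
    ∃ A', (P * ((ρ t)⁻¹ * mk [(ι t, e)] * ρ t)).toWord = A' ++ (ι t, e) :: (ρ t).toWord := by
  obtain ⟨L₁, M, L₂, hPM, hTM, hPT⟩ := exists_toWord_mul_eq P ((ρ t)⁻¹ * mk [(ι t, e)] * ρ t)
  rw [toWord_conj_mk_singleton ht] at hTM
  rw [hPT]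
  rcases List.append_eq_append_iff.1 hTM with ⟨_ | ⟨a, M'⟩, rfl, hL₂⟩ | ⟨c', -, rfl⟩
  · exact ⟨L₁, by simp_all⟩
  · -- Cancellation would reach past the middle letter of the new factor, so the two
    -- conjugators overlap in one of the ways excluded by `hsuffix`, `hinj` and `hst`.
    exfalso
    simp only [List.cons_append, List.cons.injEq] at hL₂
    obtain ⟨rfl, hv⟩ := hL₂
    have hw : A ++ (ι s, b) :: (ρ s).toWord = (L₁ ++ invRev M') ++ (ι t, !e) :: (ρ t).toWord := by
      rw [← hP, hPM, invRev_append, invRev_cons, invRev_singleton, invRev_invRev]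
      simp
    rcases List.append_cons_eq_append_cons hw with ⟨W, hW⟩ | ⟨hletter, hρ⟩ | ⟨V, hV⟩
    · exact hsuffix t s W b hW
    · simp only [Prod.mk.injEq] at hletter
      exact hst ⟨hinj (Prod.ext hletter.1 (toWord_injective hρ)), hletter.2⟩
    · exact hsuffix s t V (!e) hV
  · exact ⟨L₁ ++ c', by simp⟩

theorem exists_toWord_lift_conj_mk {ι : β → α} {ρ : β → FreeGroup α}
    (hfirst : ∀ b, FirstLetterNe (ρ b) (ι b))
    (hsuffix : ∀ b c A e, (ρ b).toWord ≠ A ++ (ι c, e) :: (ρ c).toWord)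
    (hinj : Function.Injective fun b => (ι b, ρ b)) (c : List (β × Bool)) (t : β) (e : Bool)
    (hc : IsReduced (c ++ [(t, e)])) :
    ∃ A, (lift (fun b => (ρ b)⁻¹ * of (ι b) * ρ b) (mk (c ++ [(t, e)]))).toWord =
      A ++ (ι t, e) :: (ρ t).toWord := by
  induction c using List.reverseRecOn generalizing t e with
  | nil =>
    rw [List.nil_append, lift_conj_mk_singleton, toWord_conj_mk_singleton (hfirst t)]
    exact ⟨_, rfl⟩
  | append_singleton c a ih =>
    obtain ⟨s, b⟩ := a
    have hsb : IsReduced (c ++ [(s, b)]) := hc.infix ⟨[], [(t, e)], by simp⟩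
    have hst : ¬ (s = t ∧ b = !e) := by
      rintro ⟨rfl, rfl⟩
      have h : IsReduced [(s, !e), (s, e)] := hc.infix ⟨c, [], by simp⟩
      simp at h
    obtain ⟨A, hA⟩ := ih s b hsb
    rw [← mul_mk, _root_.map_mul, lift_conj_mk_singleton]
    exact exists_toWord_mul_conj_mk_singleton hsuffix hinj hA (hfirst t) hst

theorem injective_lift_conj {ι : β → α} {ρ : β → FreeGroup α}
    (hfirst : ∀ b, FirstLetterNe (ρ b) (ι b))
    (hsuffix : ∀ b c A e, (ρ b).toWord ≠ A ++ (ι c, e) :: (ρ c).toWord)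
    (hinj : Function.Injective fun b => (ι b, ρ b)) :
    Function.Injective (lift fun b => (ρ b)⁻¹ * of (ι b) * ρ b) := by
  classical
  rw [injective_iff_map_eq_one]
  intro g hg
  rcases g.toWord.eq_nil_or_concat' with h | ⟨c, ⟨t, e⟩, hc⟩
  · exact toWord_eq_nil_iff.1 h
  obtain ⟨A, hA⟩ := exists_toWord_lift_conj_mk hfirst hsuffix hinj c t e (hc ▸ isReduced_toWord)
  rw [← hc, mk_toWord, hg, toWord_one] at hA
  simp at hA

end FreeGroup

section FreeQuandle

variable {G : Type*} [Group G] {Q S : Set G}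

theorem IsSubquandle.zpow_conj_mem (hQ : IsSubquandle Q)
    {a b : G} (ha : a ∈ Q) (hb : b ∈ Q) {ε : ℤ} (hε : ε ∈ ({1, -1} : Set ℤ)) :
    (b ^ ε)⁻¹ * a * b ^ ε ∈ Q := by
  rcases hε with rfl | rfl <;> simp [hQ a ha b hb]

theorem SubquandleClosure.zpow_conj {a b : G}
    (ha : SubquandleClosure S a) (hb : SubquandleClosure S b) {ε : ℤ}
    (hε : ε ∈ ({1, -1} : Set ℤ)) : SubquandleClosure S (b ^ ε * a * (b ^ ε)⁻¹) := by
  rcases hε with rfl | rfl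
  · simpa using ha.conjInv hb
  · simpa using ha.conj hb

theorem SubquandleClosure.mem (hSQ : S ⊆ Q) (hsub : IsSubquandle Q) {g : G}
    (hg : SubquandleClosure S g) : g ∈ Q := by
  induction hg with
  | base h => exact hSQ h
  | conj _ _ iha ihb => exact (hsub _ iha _ ihb).1
  | conjInv _ _ iha ihb => exact (hsub _ iha _ ihb).2

theorem SubquandleClosure.exists_conj {g : G} (hg : SubquandleClosure S g) :
    ∃ s : S, ∃ c : FreeGroup S, g = lift ((↑) : S → G) c * s * (lift ((↑) : S → G) c)⁻¹ := by
  induction hg with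
  | base h => exact ⟨⟨_, h⟩, 1, by simp⟩
  | conj _ _ iha ihb =>
    obtain ⟨s, c, rfl⟩ := iha
    obtain ⟨t, d, rfl⟩ := ihb
    refine ⟨s, (d * of t * d⁻¹)⁻¹ * c, ?_⟩
    simp only [_root_.map_mul, _root_.map_inv, lift_apply_of]
    group
  | conjInv _ _ iha ihb =>
    obtain ⟨s, c, rfl⟩ := iha
    obtain ⟨t, d, rfl⟩ := ihb
    refine ⟨s, d * of t * d⁻¹ * c, ?_⟩
    simp only [_root_.map_mul, _root_.map_inv, lift_apply_of]
    group

theorem SubquandleClosure.map_eq {R : Type*} [Rack R] (hSQ : S ⊆ Q) (hsub : IsSubquandle Q)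
    {φ ψ : Q → R}
    (hφ : ∀ (a b : Q) (hm : (a : G) * b * (a : G)⁻¹ ∈ Q), φ ⟨a * b * (a : G)⁻¹, hm⟩ = φ a ◃ φ b)
    (hψ : ∀ (a b : Q) (hm : (a : G) * b * (a : G)⁻¹ ∈ Q), ψ ⟨a * b * (a : G)⁻¹, hm⟩ = ψ a ◃ ψ b)
    (hS : ∀ s (hs : s ∈ S), φ ⟨s, hSQ hs⟩ = ψ ⟨s, hSQ hs⟩) {g : G}
    (hg : SubquandleClosure S g) : φ ⟨g, hg.mem hSQ hsub⟩ = ψ ⟨g, hg.mem hSQ hsub⟩ := by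
  induction hg with
  | base hs => exact hS _ hs
  | @conj a b ha hb iha ihb =>
    have hm : b * (b⁻¹ * a * b) * b⁻¹ ∈ Q := by
      group
      exact ha.mem hSQ hsub
    have hback : (⟨_, hm⟩ : Q) = ⟨a, ha.mem hSQ hsub⟩ := Subtype.ext (by group)
    have hφa := hφ ⟨b, hb.mem hSQ hsub⟩ ⟨_, (ha.conj hb).mem hSQ hsub⟩ hm
    have hψa := hψ ⟨b, hb.mem hSQ hsub⟩ ⟨_, (ha.conj hb).mem hSQ hsub⟩ hm
    rw [hback, iha, ihb] at hφa
    rw [hback, hφa] at hψa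
    exact (Rack.left_cancel _).1 hψa
  | conjInv ha hb iha ihb =>
    have hφa := hφ ⟨_, hb.mem hSQ hsub⟩ ⟨_, ha.mem hSQ hsub⟩ ((ha.conjInv hb).mem hSQ hsub)
    have hψa := hψ ⟨_, hb.mem hSQ hsub⟩ ⟨_, ha.mem hSQ hsub⟩ ((ha.conjInv hb).mem hSQ hsub)
    rw [iha, ihb] at hφa
    exact hφa.trans hψa.symm

theorem lift_act'_apply_eq_of_conj_eq {R : Type*} [Quandle R] (hind : Independent S)
    (f : S → R) {s t : S} {c d : FreeGroup S}
    (h : lift ((↑) : S → G) c * s * (lift ((↑) : S → G) c)⁻¹ =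
      lift ((↑) : S → G) d * t * (lift ((↑) : S → G) d)⁻¹) :
    lift (fun a => Rack.act' (f a)) c (f s) = lift (fun a => Rack.act' (f a)) d (f t) := by
  classical
  have hconj : d⁻¹ * c * of s * (d⁻¹ * c)⁻¹ = of t := by
    apply hind
    simp only [_root_.map_mul, _root_.map_inv, lift_apply_of]
    rw [show ∀ x y w : G, w⁻¹ * x * y * (w⁻¹ * x)⁻¹ = w⁻¹ * (x * y * x⁻¹) * w by intros; group,
      h]
    group
  obtain ⟨rfl, hz⟩ := eq_and_mem_zpowers_of_conj_eq hconj
  obtain ⟨n, hn⟩ := Subgroup.mem_zpowers_iff.1 hz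
  rw [show c = d * of s ^ n by rw [hn]; group, _root_.map_mul, map_zpow, Equiv.Perm.mul_apply,
    lift_apply_of, Equiv.Perm.zpow_apply_eq_self_of_apply_eq_self Quandle.fix]

theorem isFreeQuandleOn_of_independent (hSQ : S ⊆ Q) (hsub : IsSubquandle Q)
    (hgen : ∀ g ∈ Q, SubquandleClosure S g) (hind : Independent S) : IsFreeQuandleOn Q S := by
  refine ⟨hSQ, fun R _ f => ?_⟩
  choose sg cg hcg using fun g : Q => (hgen g g.2).exists_conj
  have hφ : ∀ (g : Q) (s : S) (c : FreeGroup S),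
      (g : G) = lift ((↑) : S → G) c * s * (lift ((↑) : S → G) c)⁻¹ →
      lift (fun s => Rack.act' (f s)) (cg g) (f (sg g)) = lift (fun s => Rack.act' (f s)) c (f s) :=
    fun g s c h => lift_act'_apply_eq_of_conj_eq hind f ((hcg g).symm.trans h)
  set φ : Q → R := fun g => lift (fun s => Rack.act' (f s)) (cg g) (f (sg g))
  have hφS : ∀ s : S, φ ⟨s, hSQ s.2⟩ = f s :=
    fun s => (hφ ⟨s, hSQ s.2⟩ s 1 (by simp)).trans (by simp)
  have hφact : ∀ (a b : Q) (hm : (a : G) * b * (a : G)⁻¹ ∈ Q),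
      φ ⟨a * b * (a : G)⁻¹, hm⟩ = φ a ◃ φ b := by
    intro a b hm
    have hab : (a : G) * b * (a : G)⁻¹ =
        lift ((↑) : S → G) (cg a * of (sg a) * (cg a)⁻¹ * cg b) * (sg b) *
          (lift ((↑) : S → G) (cg a * of (sg a) * (cg a)⁻¹ * cg b))⁻¹ := by
      rw [hcg a, hcg b]
      simp only [_root_.map_mul, _root_.map_inv, lift_apply_of]
      group
    refine (hφ ⟨_, hm⟩ (sg b) _ hab).trans ?_
    simp only [_root_.map_mul, _root_.map_inv, Equiv.Perm.mul_apply, lift_apply_of,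
      Rack.act'_apply, lift_act'_act, φ]
    simp
  refine ⟨φ, ⟨hφS, hφact⟩, fun ψ ⟨hψS, hψ⟩ => funext fun g => ?_⟩
  exact (hgen g g.2).map_eq hSQ hsub hψ hφact
    (fun s hs => (hψS ⟨s, hs⟩).trans (hφS ⟨s, hs⟩).symm)

end FreeQuandle

section Basis

variable {X : Type*} [DecidableEq X] {Q : Set (FreeGroup X)}

theorem sqbasis_subset : SQbasis Q ⊆ Q := by
  intro s hs
  obtain ⟨x, w, hw, rfl⟩ := Set.mem_iUnion.1 hs
  exact hw.1.1

theorem norm_mul_conj_mk_singleton_lt {u r : FreeGroup X} {z : X} {b : Bool}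
    {A : List (X × Bool)} (hu : u.toWord = A ++ (z, b) :: r.toWord) :
    (u * (r⁻¹ * mk [(z, !b)] * r)).norm < u.norm := by
  have hprod : u * (r⁻¹ * mk [(z, !b)] * r) = mk A * r := by
    rw [← mk_toWord (x := u), hu, ← List.singleton_append, ← mul_mk, ← mul_mk, mk_toWord]
    cases b <;> simp [mk_singleton_eq_zpow, mul_assoc]
  calc (u * (r⁻¹ * mk [(z, !b)] * r)).norm ≤ A.length + r.norm := by
        rw [hprod]; exact (FreeGroup.norm_mul_le _ _).trans (by gcongr; exact norm_mk_le)
    _ < u.norm := by simp [FreeGroup.norm, hu]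

theorem toWord_ne_of_mem_Tx {w r : FreeGroup X} {x z : X} (hw : w ∈ Tx Q x)
    (hq : r⁻¹ * of z * r ∈ Q) (A : List (X × Bool)) (b : Bool) :
    w.toWord ≠ A ++ (z, b) :: r.toWord := by
  intro hwA
  have hlong := hw.2 _ hq (bif !b then 1 else -1) (by cases b <;> simp)
  rw [← conj_mk_singleton_eq_zpow] at hlong
  exact (norm_mul_conj_mk_singleton_lt hwA).not_gt hlong

theorem independent_sqbasis : Independent (SQbasis Q) := by
  have hbasis : ∀ s : SQbasis Q, ∃ x, ∃ w ∈ Tx Q x, (s : FreeGroup X) = w⁻¹ * of x * w := by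
    rintro ⟨s, hs⟩
    obtain ⟨x, w, hw, rfl⟩ := Set.mem_iUnion.1 hs
    exact ⟨x, w, hw, rfl⟩
  choose ι ρ hρ hval using hbasis
  have hlift : (Subtype.val : SQbasis Q → FreeGroup X) = fun s => (ρ s)⁻¹ * of (ι s) * ρ s :=
    funext hval
  rw [Independent, hlift]
  refine injective_lift_conj (fun s => ?_) (fun s t A e => ?_) (fun s t hst => ?_)
  · rcases (hρ s).1.2 with h | h
    · exact h ▸ firstLetterNe_one _
    · exact h
  · exact toWord_ne_of_mem_Tx (hρ s) (hval t ▸ sqbasis_subset t.2) A e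
  · simp only [Prod.mk.injEq] at hst
    exact Subtype.ext (by rw [hval, hval, hst.1, hst.2])

theorem norm_lt_of_norm_mul_conj_mk_singleton_le {u v : FreeGroup X} {y : X} {c : Bool}
    (hv : FirstLetterNe v y) (h : (u * (v⁻¹ * mk [(y, c)] * v)).norm ≤ u.norm) :
    v.norm < u.norm ∧ (u * (v⁻¹ * mk [(y, c)] * v)).norm < u.norm := by
  obtain ⟨L₁, M, L₂, hu, hq, huq⟩ := exists_toWord_mul_eq u (v⁻¹ * mk [(y, c)] * v)
  have hlen := congrArg List.length hq
  rw [toWord_conj_mk_singleton hv] at hlen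
  simp only [FreeGroup.norm, hu, huq, List.length_append, invRev_length, List.length_cons]
    at h hlen ⊢
  omega

theorem subquandleClosure_conj_of (hQ : Q ⊆ FQ X) (hsub : IsSubquandle Q) {x : X}
    {u : FreeGroup X} (hu : FirstLetterNe u x) (hg : u⁻¹ * of x * u ∈ Q) :
    SubquandleClosure (SQbasis Q) (u⁻¹ * of x * u) := by
  induction hn : u.norm using Nat.strong_induction_on generalizing x u with
  | _ n ih =>
  by_cases hT : u ∈ Tx Q x
  · exact .base (Set.mem_iUnion.2 ⟨x, u, hT, rfl⟩)
  have hP : u ∈ Px Q x := ⟨hg, .inr hu⟩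
  obtain ⟨q, hq, ε, hε, hle⟩ :
      ∃ q ∈ Q, ∃ ε ∈ ({1, -1} : Set ℤ), (u * q ^ ε).norm ≤ u.norm := by
    by_contra! h
    exact hT ⟨hP, h⟩
  obtain ⟨y, w, hqw⟩ := hQ hq
  obtain ⟨v, hvw, hv, -⟩ := exists_firstLetterNe_conj y w
  obtain ⟨c, hc⟩ : ∃ c : Bool, ε = bif c then 1 else -1 := by
    rcases hε with rfl | rfl
    exacts [⟨true, rfl⟩, ⟨false, rfl⟩]
  have hqv : q = v⁻¹ * of y * v := hqw.trans hvw.symm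
  have hqε : q ^ ε = v⁻¹ * mk [(y, c)] * v := by rw [hc, hqv, conj_mk_singleton_eq_zpow]
  rw [hqε] at hle
  obtain ⟨hvu, hshort⟩ := norm_lt_of_norm_mul_conj_mk_singleton_le hv hle
  have hq_cl := ih _ (hn ▸ hvu) hv (hqv ▸ hq) rfl
  obtain ⟨u', hu', hu'x, hle'⟩ := exists_firstLetterNe_conj x (u * q ^ ε)
  have hconj : u'⁻¹ * of x * u' = (q ^ ε)⁻¹ * (u⁻¹ * of x * u) * q ^ ε := by
    rw [hu']
    group
  have hg' := ih _ (by rw [hqε] at hle'; omega) hu'x (hconj ▸ hsub.zpow_conj_mem hg hq hε) rfl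
  have h := hg'.zpow_conj (hqv ▸ hq_cl) hε
  rwa [hconj, show ∀ g, q ^ ε * ((q ^ ε)⁻¹ * g * q ^ ε) * (q ^ ε)⁻¹ = g by intro; group] at h

theorem subquandleClosure_sqbasis (hQ : Q ⊆ FQ X) (hsub : IsSubquandle Q) {g : FreeGroup X}
    (hg : g ∈ Q) : SubquandleClosure (SQbasis Q) g := by
  obtain ⟨x, w, rfl⟩ := hQ hg
  obtain ⟨u, hu, hux, -⟩ := exists_firstLetterNe_conj x w
  exact hu ▸ subquandleClosure_conj_of hQ hsub hux (hu ▸ hg)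

end Basis

/-- Every subquandle of a free quandle is a free quandle. -/
theorem stmt_6 {X : Type*} (Q : Set (FreeGroup X))
    (hQ : Q ⊆ FQ X) (hsub : IsSubquandle Q) :
    ∃ S : Set (FreeGroup X), IsFreeQuandleOn Q S := by
  classical
  exact ⟨SQbasis Q, isFreeQuandleOn_of_independent sqbasis_subset hsub
    (fun _ hg => subquandleClosure_sqbasis hQ hsub hg) independent_sqbasis⟩
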